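/- arXiv:math/0603191 — 4 statements merged into one kernel-verified Lean document; each statement's English description precedes it below -/
import Mathlib

section
/- Let G be a finite group and ω a normalized 3-cocycle on G with values in ℂ*. For g ∈ G define θ_g(x,y) = ω(g,x,y)·ω(x,y,(xy)⁻¹gxy) / ω(x, x⁻¹gx, y). Then for all g,x,y,z ∈ G one has θ_g(x,y)·θ_g(xy,z) = θ_g(x,yz)·θ_{x⁻¹gx}(y,z); i.e. θ satisfies the twisted 2-cocycle condition arising from the quantum double construction. -/
/-- The 3-cocycle condition for a normalized 3-cocycle `ω ∈ Z³(G, ℂˣ)`. -/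
def IsCocycle3 {G : Type*} [Group G] (ω : G → G → G → ℂˣ) : Prop :=
  ∀ g h k l, ω g h k * ω g (h * k) l * ω h k l = ω (g * h) k l * ω g h (k * l)

/-- Normalization: `ω` is 1 whenever any argument is the identity. -/
def IsNormalized3 {G : Type*} [Group G] (ω : G → G → G → ℂˣ) : Prop :=
  ∀ g h, ω 1 g h = 1 ∧ ω g 1 h = 1 ∧ ω g h 1 = 1

/-- The 2-cochain `θ_g(x,y)` of the twisted quantum double `D^ω(G)`. -/
noncomputable def dprTheta {G : Type*} [Group G] (ω : G → G → G → ℂˣ) (g x y : G) : ℂˣ :=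
  ω g x y * ω x y ((x * y)⁻¹ * g * (x * y)) / ω x (x⁻¹ * g * x) y

/-- `θ` satisfies the twisted 2-cocycle condition
`θ_g(x,y)·θ_g(xy,z) = θ_g(x,yz)·θ_{x⁻¹gx}(y,z)`. -/
theorem stmt_0 {G : Type*} [Group G] [Finite G] (ω : G → G → G → ℂˣ)
    (hω : IsCocycle3 ω) (hn : IsNormalized3 ω) :
    ∀ g x y z : G,
      dprTheta ω g x y * dprTheta ω g (x * y) z =
        dprTheta ω g x (y * z) * dprTheta ω (x⁻¹ * g * x) y z := by
  intro g x y z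
  have h1 := hω g x y z
  have h2 := hω x (x⁻¹ * g * x) y z
  have h3 := hω x y ((x * y)⁻¹ * g * (x * y)) z
  have h4 := hω x y z ((x * y * z)⁻¹ * g * (x * y * z))
  have e1 : x * (x⁻¹ * g * x) = g * x := by group
  have e2 : y * ((x * y)⁻¹ * g * (x * y)) = x⁻¹ * g * x * y := by group
  have e3 : z * ((x * y * z)⁻¹ * g * (x * y * z)) = (x * y)⁻¹ * g * (x * y) * z := by group
  have e4 : (x * (y * z))⁻¹ * g * (x * (y * z)) = (x * y * z)⁻¹ * g * (x * y * z) := by group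
  have e5 : (y * z)⁻¹ * (x⁻¹ * g * x) * (y * z) = (x * y * z)⁻¹ * g * (x * y * z) := by group
  have e6 : y⁻¹ * (x⁻¹ * g * x) * y = (x * y)⁻¹ * g * (x * y) := by group
  rw [e1] at h2
  rw [e2] at h3
  rw [e3] at h4
  simp only [dprTheta, e4, e5, e6]
  -- pass to ℂ
  rw [Units.ext_iff] at h1 h2 h3 h4 ⊢
  simp only [Units.val_mul, Units.val_div_eq_div_val] at h1 h2 h3 h4 ⊢
  rw [div_mul_div_comm, div_mul_div_comm,
    div_eq_div_iff (mul_ne_zero (Units.ne_zero _) (Units.ne_zero _))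
      (mul_ne_zero (Units.ne_zero _) (Units.ne_zero _))]
  set a1 : ℂ := (ω g x y : ℂ)
  set a2 : ℂ := (ω x y ((x * y)⁻¹ * g * (x * y)) : ℂ)
  set a3 : ℂ := (ω x (x⁻¹ * g * x) y : ℂ)
  set a4 : ℂ := (ω g (x * y) z : ℂ)
  set a5 : ℂ := (ω (x * y) z ((x * y * z)⁻¹ * g * (x * y * z)) : ℂ)
  set a6 : ℂ := (ω (x * y) ((x * y)⁻¹ * g * (x * y)) z : ℂ)
  set a7 : ℂ := (ω g x (y * z) : ℂ)
  set a8 : ℂ := (ω x (y * z) ((x * y * z)⁻¹ * g * (x * y * z)) : ℂ)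
  set a9 : ℂ := (ω x (x⁻¹ * g * x) (y * z) : ℂ)
  set a10 : ℂ := (ω (x⁻¹ * g * x) y z : ℂ)
  set a11 : ℂ := (ω y z ((x * y * z)⁻¹ * g * (x * y * z)) : ℂ)
  set a12 : ℂ := (ω y ((x * y)⁻¹ * g * (x * y)) z : ℂ)
  set a13 : ℂ := (ω x y z : ℂ)
  set a14 : ℂ := (ω (g * x) y z : ℂ)
  set a15 : ℂ := (ω x (x⁻¹ * g * x * y) z : ℂ)
  set a16 : ℂ := (ω x y ((x * y)⁻¹ * g * (x * y) * z) : ℂ)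
  -- h1 : a1*a4*a13 = a14*a7 ; h2 : a3*a15*a10 = a14*a9
  -- h3 : a2*a15*a12 = a6*a16 ; h4 : a13*a8*a11 = a5*a16
  -- goal : a1*a2*(a4*a5)*(a9*a12) = a7*a8*(a10*a11)*(a3*a6)
  have hM : (a1 * a4 * a13) * (a14 * a9) * (a2 * a15 * a12) * (a5 * a16) ≠ 0 := by
    repeat' apply mul_ne_zero
    all_goals exact Units.ne_zero _
  refine mul_right_cancel₀ hM ?_
  -- P = a1*a2*(a4*a5)*(a9*a12), M = L1*R2*L3*R4
  linear_combination
      (a1 * a2 * (a4 * a5) * (a9 * a12)) * (a14 * a9) * (a2 * a15 * a12) * (a5 * a16) * h1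
    - (a1 * a2 * (a4 * a5) * (a9 * a12)) * (a14 * a7) * (a2 * a15 * a12) * (a5 * a16) * h2
    + (a1 * a2 * (a4 * a5) * (a9 * a12)) * (a14 * a7) * (a3 * a15 * a10) * (a5 * a16) * h3
    - (a1 * a2 * (a4 * a5) * (a9 * a12)) * (a14 * a7) * (a3 * a15 * a10) * (a6 * a16) * h4
end

section
/- Let Ḡ be a finite group, A a right Ḡ-module (written multiplicatively, with action ◁), E = A ⋊ Ḡ the semidirect product with multiplication (x,a)(y,b) = (xy, (a◁y)·b), and let ε : Ḡ × Ḡ → Â = Hom(A, ℂˣ) be a normalized 2-cocycle for the induced left Ḡ-action on Â given by (h ▷ χ)(a) = χ(a ◁ h). Then the 3-cochain ω on E defined by ω((h₁,a₁),(h₂,a₂),(h₃,a₃)) = ε(h₂,h₃)(a₁) is a normalized 3-cocycle on E with values in ℂˣ. -/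
/-- Given a right `Ḡ`-module `A` and a normalized 2-cocycle
`ε ∈ Z²(Ḡ, Â)` (for the induced left action `(h ▷ χ)(a) = χ(a ◁ h)`),
the 3-cochain `ω((h₁,a₁),(h₂,a₂),(h₃,a₃)) = ε(h₂,h₃)(a₁)` is a normalized
3-cocycle on the semidirect product `E = A ⋊ Ḡ` (with multiplication
`(x,a)(y,b) = (xy, (a◁y)·b)`). -/
theorem stmt_2 {G A : Type*} [Group G] [CommGroup A] [Finite G] [Finite A]
    (act : A → G → A)
    (act_one : ∀ a, act a 1 = a)
    (act_mul : ∀ a x y, act a (x * y) = act (act a x) y)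
    (act_hom : ∀ a b x, act (a * b) x = act a x * act b x)
    (ε : G → G → A →* ℂˣ)
    (εnorm₁ : ∀ x, ε x 1 = 1) (εnorm₂ : ∀ y, ε 1 y = 1)
    (εcoc : ∀ x y z a, ε y z (act a x) * ε x (y * z) a = ε (x * y) z a * ε x y a) :
    -- `E = A ⋊ Ḡ` has underlying set `Ḡ × A` and multiplication below:
    let mulE : G × A → G × A → G × A := fun p q => (p.1 * q.1, act p.2 q.1 * q.2)
    let ωE : G × A → G × A → G × A → ℂˣ := fun p q r => ε q.1 r.1 p.2
    -- 3-cocycle identity: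
    (∀ p q r s : G × A,
        ωE p q r * ωE p (mulE q r) s * ωE q r s =
          ωE (mulE p q) r s * ωE p q (mulE r s)) ∧
    -- normalization:
    (∀ p q r : G × A, p = (1, 1) ∨ q = (1, 1) ∨ r = (1, 1) → ωE p q r = 1) := by
  intro mulE ωE
  constructor
  · intro p q r s
    simp only [mulE, ωE, map_mul]
    have h := εcoc q.1 r.1 s.1 p.2
    rw [mul_comm ((ε q.1 r.1) p.2), ← h, mul_right_comm]
  · intro p q r h
    rcases h with h | h | h <;> subst h <;>
      simp only [ωE, εnorm₁, εnorm₂, MonoidHom.one_apply, map_one]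
end

section
/- In any extra-special 2-group Q of width l ≥ 2 (|Q| = 2^{2l+1}), every cyclic subgroup of order 4 is contained in a subgroup of Q isomorphic to the quaternion group Q₈. -/
/-!
Since `Z(Q) = {1, x²}`, every `y` not commuting with `x` satisfies `⁅x, y⁆ = x²` and
`y² ∈ {1, x²}`; one with `y² = x²` generates `Q₈` together with `x`. If there were none, every
element outside the centralizer `C` of `x` would be an involution and hence would invert `C`.
Then `C` is abelian, its involutions are central, and squaring `C → Z(Q)` gives `|C| ≤ 4`.
As the conjugates of `x` lie in `Z(Q) x`, also `|Q : C| ≤ 2`, so `|Q| ≤ 8 < 2^(2l+1)`.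
-/

open Subgroup
open scoped commutatorElement

section General

variable {G : Type*} [Group G]

section Quaternion

theorem pow_val_add_of_orderOf_eq {m : ℕ} [NeZero m] {x : G} (hx : orderOf x = m)
    (i j : ZMod m) : x ^ (i + j).val = x ^ i.val * x ^ j.val := by
  rw [← pow_add, pow_eq_pow_iff_modEq, hx, ZMod.val_add]
  exact Nat.mod_modEq _ m

theorem pow_val_sub_of_orderOf_eq {m : ℕ} [NeZero m] {x : G} (hx : orderOf x = m)
    (i j : ZMod m) : x ^ (j - i).val = (x ^ i.val)⁻¹ * x ^ j.val := by
  rw [eq_inv_mul_iff_mul_eq, ← pow_val_add_of_orderOf_eq hx, add_sub_cancel]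

theorem pow_mul_eq_mul_inv_pow {x y : G} (hxy : x * y = y * x⁻¹) (k : ℕ) :
    x ^ k * y = y * (x ^ k)⁻¹ := by
  rw [← inv_pow]
  exact (SemiconjBy.pow_right hxy.symm k).symm

theorem mul_eq_mul_inv_of_commutatorElement_eq_sq {x y : G} (h : ⁅x, y⁆ = x ^ 2) :
    x * y = y * x⁻¹ :=
  calc x * y = x⁻¹ * x ^ 2 * y := by group
    _ = x⁻¹ * ⁅x, y⁆ * y := by rw [h]
    _ = y * x⁻¹ := by rw [commutatorElement_def]; group

variable {n : ℕ} [NeZero n] {x y : G}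

def QuaternionGroup.lift (hx : orderOf x = 2 * n) (hy : y ^ 2 = x ^ n) (hxy : x * y = y * x⁻¹) :
    QuaternionGroup n →* G :=
  MonoidHom.mk'
    (fun | .a i => x ^ i.val
         | .xa i => y * x ^ i.val)
    (by
      rintro (i | i) (j | j)
      · exact pow_val_add_of_orderOf_eq hx i j
      · show y * x ^ (j - i).val = x ^ i.val * (y * x ^ j.val)
        rw [← mul_assoc, pow_mul_eq_mul_inv_pow hxy, mul_assoc, pow_val_sub_of_orderOf_eq hx]
      · show y * x ^ (i + j).val = y * x ^ i.val * x ^ j.val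
        rw [pow_val_add_of_orderOf_eq hx, mul_assoc]
      · show x ^ ((n : ZMod (2 * n)) + j - i).val = y * x ^ i.val * (y * x ^ j.val)
        have hn : (n : ZMod (2 * n)).val = n :=
          ZMod.val_cast_of_lt (by have := NeZero.pos n; omega)
        rw [add_sub_assoc, pow_val_add_of_orderOf_eq hx, pow_val_sub_of_orderOf_eq hx, hn, ← hy,
          mul_assoc y, ← mul_assoc _ y, pow_mul_eq_mul_inv_pow hxy, sq]
        group)

theorem QuaternionGroup.lift_injective (hx : orderOf x = 2 * n) (hy : y ^ 2 = x ^ n)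
    (hxy : x * y = y * x⁻¹) (hc : ¬Commute x y) : Function.Injective (lift hx hy hxy) := by
  rw [injective_iff_map_eq_one]
  rintro (i | i) h
  · have h' : x ^ i.val = 1 := h
    have hdvd := orderOf_dvd_of_pow_eq_one h'
    rw [hx] at hdvd
    rw [one_def, (ZMod.val_eq_zero i).mp (Nat.eq_zero_of_dvd_of_lt hdvd (ZMod.val_lt i))]
  · have h' : y * x ^ i.val = 1 := h
    refine absurd ?_ hc
    rw [eq_inv_of_mul_eq_one_left h']
    exact ((Commute.refl x).pow_right _).inv_right

theorem exists_mulEquiv_quaternionGroup (hx : orderOf x = 2 * n) (hy : y ^ 2 = x ^ n)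
    (hxy : x * y = y * x⁻¹) (hc : ¬Commute x y) :
    ∃ H : Subgroup G, x ∈ H ∧ Nonempty (H ≃* QuaternionGroup n) := by
  refine ⟨(QuaternionGroup.lift hx hy hxy).range, ⟨.a 1, ?_⟩,
    ⟨(MonoidHom.ofInjective (QuaternionGroup.lift_injective hx hy hxy hc)).symm⟩⟩
  show x ^ (1 : ZMod (2 * n)).val = x
  conv_rhs => rw [← pow_one x]
  rw [pow_eq_pow_iff_modEq, hx, ZMod.val_one_eq_one_mod]
  exact Nat.mod_modEq 1 _

end Quaternion

theorem Subgroup.eq_one_or_eq_of_card_eq_two {H : Subgroup G} (hH : Nat.card H = 2) {z c : G}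
    (hz : z ∈ H) (hz1 : z ≠ 1) (hc : c ∈ H) : c = 1 ∨ c = z := by
  obtain ⟨w, -, hw⟩ := (Nat.card_eq_two_iff' (1 : H)).mp hH
  by_contra! h
  have hcw : (⟨c, hc⟩ : H) = w := hw _ fun h' => h.1 (congrArg Subtype.val h')
  have hzw : (⟨z, hz⟩ : H) = w := hw _ fun h' => hz1 (congrArg Subtype.val h')
  exact h.2 (congrArg Subtype.val (hcw.trans hzw.symm))

theorem Subgroup.index_centralizer_le_card {H : Subgroup G} [Finite H] {x : G}
    (hx : ∀ g : G, ⁅g, x⁆ ∈ H) : (centralizer {x}).index ≤ Nat.card H := by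
  have hindex : (centralizer {x}).index = (MulAction.stabilizer (ConjAct G) x).index := by
    rw [centralizer_eq_comap_stabilizer]
    exact index_comap_of_surjective _ ConjAct.toConjAct.surjective
  rw [hindex, MulAction.index_stabilizer]
  have hsub : MulAction.orbit (ConjAct G) x ⊆ (· * x) '' (H : Set G) := by
    intro g hg
    obtain ⟨c, rfl⟩ := isConj_iff.mp (ConjAct.mem_orbit_conjAct.mp hg).symm
    exact ⟨⁅c, x⁆, hx c, by rw [commutatorElement_def]; group⟩
  calc (MulAction.orbit (ConjAct G) x).ncard ≤ ((· * x) '' (H : Set G)).ncard :=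
        Set.ncard_le_ncard hsub ((H : Set G).toFinite.image _)
    _ ≤ (H : Set G).ncard := Set.ncard_image_le (H : Set G).toFinite
    _ = Nat.card H := Nat.card_coe_set_eq _

section Involutions

variable {C : Subgroup G} (hC : ∀ g ∉ C, g ^ 2 = 1)
include hC

theorem conj_eq_inv_of_forall_notMem_sq_eq_one {g a : G} (hg : g ∉ C) (ha : a ∈ C) :
    g * a * g⁻¹ = a⁻¹ := by
  have hga : g * a ∉ C := fun h => hg (by simpa using mul_mem h (inv_mem ha))
  have hg2 : g⁻¹ = g := inv_eq_of_mul_eq_one_right (by rw [← sq]; exact hC g hg)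
  rw [hg2]
  exact eq_inv_of_mul_eq_one_left (by rw [mul_assoc, ← sq]; exact hC _ hga)

theorem commute_of_forall_notMem_sq_eq_one (hCtop : C ≠ ⊤) {a b : G} (ha : a ∈ C) (hb : b ∈ C) :
    Commute a b := by
  obtain ⟨g, hg⟩ : ∃ g, g ∉ C := by
    by_contra! h
    exact hCtop (eq_top_iff.mpr fun g _ => h g)
  have conj {c : G} (hc : c ∈ C) := conj_eq_inv_of_forall_notMem_sq_eq_one hC hg hc
  have h : a⁻¹ * b⁻¹ = b⁻¹ * a⁻¹ := by
    rw [← mul_inv_rev, ← conj (mul_mem hb ha), ← conj ha, ← conj hb]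
    group
  exact Commute.inv_inv_iff.mp h

theorem mem_center_of_forall_notMem_sq_eq_one (hCtop : C ≠ ⊤) {c : G} (hc : c ∈ C)
    (hc2 : c ^ 2 = 1) : c ∈ center G := by
  rw [mem_center_iff]
  intro g
  by_cases hg : g ∈ C
  · exact commute_of_forall_notMem_sq_eq_one hC hCtop hg hc
  · have hc' : c⁻¹ = c := inv_eq_of_mul_eq_one_right (by rw [← sq]; exact hc2)
    rw [← mul_inv_eq_iff_eq_mul, conj_eq_inv_of_forall_notMem_sq_eq_one hC hg hc, hc']

theorem card_le_sq_card_center_of_forall_notMem_sq_eq_one [Finite G]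
    (hsq : ∀ g : G, g ^ 2 ∈ center G) (hCtop : C ≠ ⊤) : Nat.card C ≤ Nat.card (center G) ^ 2 := by
  let squareHom : C →* G := MonoidHom.mk' (fun c => (c : G) ^ 2) fun a b =>
    (commute_of_forall_notMem_sq_eq_one hC hCtop a.2 b.2).mul_pow 2
  have hrange : Nat.card squareHom.range ≤ Nat.card (center G) := by
    refine card_le_of_le ?_
    rintro _ ⟨c, rfl⟩
    exact hsq c
  have hker : Nat.card squareHom.ker ≤ Nat.card (center G) := by
    refine Nat.card_le_card_of_injective (fun c => ⟨(c : C), ?_⟩) ?_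
    · exact mem_center_of_forall_notMem_sq_eq_one hC hCtop (c : C).2 c.2
    · exact fun a b h => Subtype.ext (Subtype.ext (Subtype.mk.inj h))
  rw [← card_mul_index squareHom.ker, index_ker]
  nlinarith

end Involutions

theorem card_le_card_center_pow_three_of_forall_notMem_centralizer_sq_eq_one [Finite G] {x : G}
    (hx : x ∉ center G) (hcomm : ∀ g : G, ⁅g, x⁆ ∈ center G) (hsq : ∀ g : G, g ^ 2 ∈ center G)
    (hinv : ∀ g ∉ centralizer {x}, g ^ 2 = 1) : Nat.card G ≤ Nat.card (center G) ^ 3 := by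
  have htop : centralizer {x} ≠ ⊤ := by
    rwa [Ne, centralizer_eq_top_iff_subset, Set.singleton_subset_iff]
  calc Nat.card G = (centralizer {x}).index * Nat.card (centralizer {x}) := (index_mul_card _).symm
    _ ≤ Nat.card (center G) * Nat.card (center G) ^ 2 :=
      Nat.mul_le_mul (index_centralizer_le_card hcomm)
        (card_le_sq_card_center_of_forall_notMem_sq_eq_one hinv hsq htop)
    _ = Nat.card (center G) ^ 3 := by ring

end General

/-- In any extra-special 2-group `Q` of width `l ≥ 2` (i.e. `|Q| = 2^(2l+1)`,
`Z(Q) = Q'` of order 2, squares central), every cyclic subgroup of order 4 is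
contained in a subgroup of `Q` isomorphic to the quaternion group `Q₈`. -/
theorem stmt_18 {Q : Type*} [Group Q] [Finite Q] (l : ℕ) (hl : 2 ≤ l)
    (hcard : Nat.card Q = 2 ^ (2 * l + 1))
    (hcomm : commutator Q = Subgroup.center Q)
    (hZ : Nat.card (Subgroup.center Q) = 2)
    (hsq : ∀ x : Q, x ^ 2 ∈ Subgroup.center Q) :
    ∀ x : Q, orderOf x = 4 →
      ∃ H : Subgroup Q, x ∈ H ∧ Nonempty (H ≃* QuaternionGroup 2) := by
  intro x hx
  have hcc (a b : Q) : ⁅a, b⁆ ∈ center Q :=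
    hcomm ▸ commutator_mem_commutator (mem_top a) (mem_top b)
  have hx2 : x ^ 2 ≠ 1 := pow_ne_one_of_lt_orderOf (by norm_num) (by omega)
  have hcenter {c : Q} (hc : c ∈ center Q) : c = 1 ∨ c = x ^ 2 :=
    eq_one_or_eq_of_card_eq_two hZ (hsq x) hx2 hc
  by_cases hy : ∃ y, ¬Commute x y ∧ y ^ 2 = x ^ 2
  · obtain ⟨y, hxy, hy2⟩ := hy
    have hcomm_xy : ⁅x, y⁆ = x ^ 2 :=
      (hcenter (hcc x y)).resolve_left (mt commutatorElement_eq_one_iff_commute.mp hxy)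
    exact exists_mulEquiv_quaternionGroup (n := 2) hx hy2
      (mul_eq_mul_inv_of_commutatorElement_eq_sq hcomm_xy) hxy
  push Not at hy
  have hxZ : x ∉ center Q := fun hxZ => by
    have hx1 : x ≠ 1 := by rintro rfl; simp at hx
    rcases hcenter hxZ with h | h
    · exact hx1 h
    · exact hx1 (left_eq_mul.mp (h.trans (sq x)))
  have hinv : ∀ g ∉ centralizer {x}, g ^ 2 = 1 := fun g hg =>
    (hcenter (hsq g)).resolve_right
      (hy g fun h => hg (mem_centralizer_singleton_iff.mpr h.symm))
  have hsmall : Nat.card Q ≤ 2 ^ 3 :=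
    hZ ▸ card_le_card_center_pow_three_of_forall_notMem_centralizer_sq_eq_one hxZ (hcc · x) hsq hinv
  have hlarge : 2 ^ 5 ≤ Nat.card Q := hcard ▸ Nat.pow_le_pow_right (by norm_num) (by omega)
  omega
end

section
/- Let G be a finite group, ω ∈ Z³(G, ℂˣ) a normalized 3-cocycle, and let g = Σ_x ω(x,x⁻¹,x) e(x)⊗1 and u = Σ_x ω(x,x⁻¹,x)⁻² e(x)⊗x⁻¹ in the twisted quantum double D^ω(G). Then (gu)⁻¹ = Σ_x e(x)⊗x; i.e. in the algebra D^ω(G) with multiplication (e(g)⊗x)(e(h)⊗y) = θ_g(x,y)δ_{g, xhx⁻¹} e(g)⊗xy, the element v = Σ_x e(x)⊗x satisfies v·g·u = 1 = Σ_x e(x)⊗1. -/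
variable {G : Type*} [Group G] [Fintype G] [DecidableEq G]

/-- Multiplication of `D^ω(G)`, on coefficient functions with respect to the basis
`e(g) ⊗ x`: it is induced by
`(e(g)⊗x)·(e(h)⊗y) = θ_g(x,y) δ_{g, xhx⁻¹} e(g)⊗xy`. -/
noncomputable def mulD (ω : G → G → G → ℂˣ) (f₁ f₂ : G → G → ℂ) : G → G → ℂ :=
  fun g z => ∑ x : G,
    (dprTheta ω g x (x⁻¹ * z) : ℂ) * f₁ g x * f₂ (x⁻¹ * g * x) (x⁻¹ * z)

/-- The element `v = Σ_x e(x)⊗x`. -/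
noncomputable def vElt : G → G → ℂ := fun g x => if x = g then 1 else 0

/-- The trace element `g = Σ_x ω(x,x⁻¹,x) e(x)⊗1`. -/
noncomputable def gElt (ω : G → G → G → ℂˣ) : G → G → ℂ :=
  fun g x => if x = 1 then (ω g g⁻¹ g : ℂ) else 0

/-- The Drinfeld element `u = Σ_x ω(x,x⁻¹,x)⁻² e(x)⊗x⁻¹`. -/
noncomputable def uElt (ω : G → G → G → ℂˣ) : G → G → ℂ :=
  fun g x => if x = g⁻¹ then (((ω g g⁻¹ g)⁻¹ : ℂˣ) : ℂ) ^ 2 else 0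

/-- The unit `1 = Σ_g e(g)⊗1` of `D^ω(G)`. -/
noncomputable def oneElt : G → G → ℂ := fun _ x => if x = 1 then 1 else 0

/-- In `D^ω(G)`, the element `v = Σ_x e(x)⊗x` satisfies `v·g·u = 1`, i.e.
`(gu)⁻¹ = Σ_x e(x)⊗x` (the canonical ribbon element of `D^ω(G)`). -/
theorem stmt_19 (ω : G → G → G → ℂˣ) (hω : IsCocycle3 ω) (hn : IsNormalized3 ω) :
    mulD ω (mulD ω vElt (gElt ω)) (uElt ω) = oneElt := by
  funext g z
  simp only [mulD, vElt, gElt, uElt, oneElt, mul_ite, ite_mul, mul_zero, zero_mul, mul_one,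
    one_mul, Finset.sum_ite_eq', Finset.mem_univ, if_true, inv_mul_eq_one]
  rw [Finset.sum_eq_single g]
  · have h1 : g⁻¹ * g * g = g := by group
    rw [h1, if_pos rfl]
    by_cases hz : z = 1
    · subst hz
      rw [if_pos (by rw [mul_one])]
      have ht1 : dprTheta ω g g (g⁻¹ * g) = 1 := by
        rw [inv_mul_cancel]
        unfold dprTheta
        rw [(hn _ _).2.2, (hn _ _).2.1, mul_one, h1, (hn _ _).2.2]
        simp
      have ht2 : dprTheta ω g g (g⁻¹ * 1) = ω g g⁻¹ g := by
        rw [mul_one]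
        unfold dprTheta
        have h2 : (g * g⁻¹)⁻¹ * g * (g * g⁻¹) = g := by group
        rw [h2, h1, mul_comm (ω g g g⁻¹), mul_div_assoc, div_self', mul_one]
      rw [ht1, ht2, if_pos rfl]
      have hw : ((ω g g⁻¹ g : ℂˣ) : ℂ) ≠ 0 := Units.ne_zero _
      rw [Units.val_one, Units.val_inv_eq_inv_val]
      field_simp
    · rw [if_neg (fun h => hz (mul_left_cancel (b := z) (by rw [h, mul_one]))), if_neg hz]
  · intro b _ hb
    rw [if_neg hb]
    exact ite_self 0
  · intro h
    exact absurd (Finset.mem_univ g) h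
end
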